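/- arXiv:2402.19444 — 2 statements merged into one kernel-verified Lean document; each statement's English description precedes it below -/
import Mathlib

section
/- Let c, d ∈ ℤ with cd < 0. Then there exists a piecewise-linear increasing homeomorphism f of [0,1] with finitely many breakpoints, all at dyadic rationals, all slopes integer powers of 2, with right derivative 2^c at 0 and left derivative 2^d at 1, such that f(x) ≠ x for all x ∈ (0,1). -/
/-- A real number is dyadic if it has the form `a / 2 ^ n` with `a : ℤ`, `n : ℕ`. -/
def IsDyadic (x : ℝ) : Prop := ∃ (a : ℤ) (n : ℕ), x = (a : ℝ) / 2 ^ n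

/-- `f` is piecewise linear on `[0,1]` with dyadic breakpoints `x 0 = 0 < ⋯ < x n = 1`
and slope `2 ^ (k i)` on the `i`-th piece. -/
def IsPLF (f : ℝ → ℝ) (n : ℕ) (x : Fin (n + 1) → ℝ) (k : Fin n → ℤ) : Prop :=
  x 0 = 0 ∧ x (Fin.last n) = 1 ∧ StrictMono x ∧
  (∀ i, IsDyadic (x i)) ∧
  ∀ i : Fin n, ∀ t ∈ Set.Icc (x i.castSucc) (x i.succ),
    f t = f (x i.castSucc) + (2 : ℝ) ^ (k i) * (t - x i.castSucc)

lemma IsDyadic.sub {x y : ℝ} (hx : IsDyadic x) (hy : IsDyadic y) : IsDyadic (x - y) := by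
  obtain ⟨a, m, rfl⟩ := hx
  obtain ⟨b, n, rfl⟩ := hy
  refine ⟨a * 2 ^ n - b * 2 ^ m, m + n, ?_⟩
  push_cast
  field_simp
  ring

lemma IsDyadic.abs {x : ℝ} (hx : IsDyadic x) : IsDyadic |x| := by
  obtain ⟨a, n, rfl⟩ := hx
  refine ⟨|a|, n, ?_⟩
  rw [abs_div, abs_of_pos (by positivity : (0:ℝ) < 2 ^ n)]
  push_cast
  rfl

lemma dy_two_zpow (m : ℤ) : IsDyadic ((2:ℝ) ^ m) := by
  rcases le_or_gt 0 m with h | h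
  · refine ⟨2 ^ m.toNat, 0, ?_⟩
    rw [pow_zero, div_one]
    push_cast
    rw [← zpow_natCast (2:ℝ)]
    congr 1
    omega
  · refine ⟨1, (-m).toNat, ?_⟩
    rw [Int.cast_one, one_div, ← zpow_natCast (2:ℝ), ← zpow_neg]
    congr 1
    omega

lemma two_zpow_ne_one {j : ℤ} (hj : j ≠ 0) : (2:ℝ) ^ j ≠ 1 := by
  intro h
  exact hj (zpow_right_injective₀ (by norm_num) (by norm_num) (h.trans (zpow_zero 2).symm))

/-- If `c * d < 0`, there is an element of Thompson's group `F` with slope `2 ^ c` at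
`0⁺` and `2 ^ d` at `1⁻` that fixes no point of `(0,1)`. -/
theorem stmt14 (c d : ℤ) (hcd : c * d < 0) :
    ∃ (f : ℝ → ℝ) (n : ℕ) (x : Fin (n + 2) → ℝ) (k : Fin (n + 1) → ℤ),
      IsPLF f (n + 1) x k ∧ f 0 = 0 ∧ f 1 = 1 ∧
      k 0 = c ∧ k (Fin.last n) = d ∧
      ∀ t ∈ Set.Ioo (0 : ℝ) 1, f t ≠ t := by
  have hc0 : c ≠ 0 := by rintro rfl; simp at hcd
  have hd0 : d ≠ 0 := by rintro rfl; simp at hcd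
  set E : ℕ := c.natAbs + d.natAbs + 2 with hE
  set ε : ℝ := 2 ^ (-(E:ℤ)) with hε
  have hεpos : 0 < ε := by positivity
  set A : ℝ := |1 - (2:ℝ) ^ d| * ε with hA
  set B : ℝ := 1 - |(2:ℝ) ^ c - 1| * ε with hB
  have h2d1 : (2:ℝ) ^ d ≠ 1 := two_zpow_ne_one hd0
  have h2c1 : (2:ℝ) ^ c ≠ 1 := two_zpow_ne_one hc0
  have hApos : 0 < A := mul_pos (abs_pos.2 (sub_ne_zero.2 (Ne.symm h2d1))) hεpos
  have hbound : ∀ j m : ℤ, (j.natAbs : ℤ) + 1 + m ≤ -2 →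
      |1 - (2:ℝ) ^ j| * 2 ^ m ≤ 1/4 := by
    intro j m hjm
    have h2j : (0:ℝ) < 2 ^ j := by positivity
    have h2j' : (2:ℝ) ^ j ≤ 2 ^ (j.natAbs : ℤ) :=
      zpow_le_zpow_right₀ one_le_two (by omega)
    have h1 : (1:ℝ) ≤ 2 ^ (j.natAbs : ℤ) := one_le_zpow₀ one_le_two (by omega)
    have habs : |1 - (2:ℝ) ^ j| ≤ 2 ^ ((j.natAbs : ℤ) + 1) := by
      rw [abs_le]
      constructor
      · rw [zpow_add₀ (two_ne_zero)]
        nlinarith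
      · rw [zpow_add₀ (two_ne_zero)]
        nlinarith
    have h2m : (0:ℝ) < 2 ^ m := by positivity
    calc |1 - (2:ℝ) ^ j| * 2 ^ m ≤ 2 ^ ((j.natAbs : ℤ) + 1) * 2 ^ m := by
          exact mul_le_mul_of_nonneg_right habs h2m.le
      _ = 2 ^ ((j.natAbs : ℤ) + 1 + m) := by rw [← zpow_add₀ (two_ne_zero)]
      _ ≤ 2 ^ (-2 : ℤ) := zpow_le_zpow_right₀ one_le_two hjm
      _ = 1/4 := by norm_num
  have hA4 : A ≤ 1/4 := hbound d (-(E:ℤ)) (by simp only [hE]; omega)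
  have hB4 : |(2:ℝ) ^ c - 1| * ε ≤ 1/4 := by
    rw [abs_sub_comm]
    exact hbound c (-(E:ℤ)) (by simp only [hE]; omega)
  have hAB : A < B := by rw [hB]; linarith
  have hB1 : B < 1 := by
    have : 0 < |(2:ℝ) ^ c - 1| * ε := mul_pos (abs_pos.2 (sub_ne_zero.2 h2c1)) hεpos
    rw [hB]; linarith
  have hkey : ((2:ℝ) ^ c - 1) * A = (1 - 2 ^ d) * (1 - B) := by
    have h1B : 1 - B = |(2:ℝ) ^ c - 1| * ε := by rw [hB]; ring
    rw [hA, h1B]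
    rcases mul_neg_iff.1 hcd with ⟨hc, hd⟩ | ⟨hc, hd⟩
    · rw [abs_of_pos (by linarith [zpow_lt_one_of_neg₀ (one_lt_two (α := ℝ)) hd] :
          (0:ℝ) < 1 - 2 ^ d),
        abs_of_pos (by linarith [one_lt_zpow₀ (one_lt_two (α := ℝ)) hc] :
          (0:ℝ) < (2:ℝ) ^ c - 1)]
      ring
    · rw [abs_of_neg (by linarith [one_lt_zpow₀ (one_lt_two (α := ℝ)) hd] :
          (1:ℝ) - 2 ^ d < 0),
        abs_of_neg (by linarith [zpow_lt_one_of_neg₀ (one_lt_two (α := ℝ)) hc] :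
          (2:ℝ) ^ c - 1 < 0)]
      ring
  set f : ℝ → ℝ := fun t => if t ≤ A then 2 ^ c * t
      else if t ≤ B then 2 ^ c * A + (t - A)
      else 2 ^ c * A + (B - A) + 2 ^ d * (t - B) with hf
  have hf0 : f 0 = 0 := by rw [hf]; simp [hApos.le]
  have hfA : f A = 2 ^ c * A := by rw [hf]; simp
  have hfB : f B = 2 ^ c * A + (B - A) := by
    rw [hf]; simp only
    rw [if_neg (not_le.2 hAB), if_pos le_rfl]
  have hf1 : f 1 = 1 := by
    rw [hf]; simp only
    rw [if_neg (by linarith), if_neg (not_le.2 hB1)]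
    linear_combination hkey
  have hAdy : IsDyadic A := by
    have hA' : A = |(2:ℝ) ^ (-(E:ℤ)) - 2 ^ (d + -(E:ℤ))| := by
      rw [hA, hε, zpow_add₀ (two_ne_zero),
        show (2:ℝ) ^ (-(E:ℤ)) - 2 ^ d * 2 ^ (-(E:ℤ)) = (1 - 2 ^ d) * 2 ^ (-(E:ℤ)) from by
          ring,
        abs_mul, abs_of_pos (by positivity : (0:ℝ) < 2 ^ (-(E:ℤ)))]
    rw [hA']
    exact ((dy_two_zpow _).sub (dy_two_zpow _)).abs
  have hBdy : IsDyadic B := by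
    have hB' : B = 1 - |(2:ℝ) ^ (c + -(E:ℤ)) - 2 ^ (-(E:ℤ))| := by
      rw [hB, hε, zpow_add₀ (two_ne_zero),
        show (2:ℝ) ^ c * 2 ^ (-(E:ℤ)) - 2 ^ (-(E:ℤ)) = ((2:ℝ) ^ c - 1) * 2 ^ (-(E:ℤ))
          from by ring,
        abs_mul, abs_of_pos (by positivity : (0:ℝ) < 2 ^ (-(E:ℤ)))]
    rw [hB']
    exact IsDyadic.sub ⟨1, 0, by norm_num⟩ (IsDyadic.abs (IsDyadic.sub (dy_two_zpow _) (dy_two_zpow _)))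
  refine ⟨f, 2, ![0, A, B, 1], ![c, 0, d], ⟨rfl, rfl, ?_, ?_, ?_⟩, hf0, hf1, rfl, rfl, ?_⟩
  · rw [Fin.strictMono_iff_lt_succ]
    intro i
    fin_cases i
    · show (0:ℝ) < A
      exact hApos
    · show A < B
      exact hAB
    · show B < 1
      exact hB1
  · intro i
    fin_cases i
    · show IsDyadic 0
      exact ⟨0, 0, by norm_num⟩
    · show IsDyadic A
      exact hAdy
    · show IsDyadic B
      exact hBdy
    · show IsDyadic 1
      exact ⟨1, 0, by norm_num⟩
  · intro i t ht
    fin_cases i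
    · have ht' : t ∈ Set.Icc (0:ℝ) A := ht
      show f t = f 0 + (2:ℝ) ^ c * (t - 0)
      rw [hf0, hf]; simp only
      rw [if_pos ht'.2]
      ring
    · have ht' : t ∈ Set.Icc A B := ht
      show f t = f A + (2:ℝ) ^ (0:ℤ) * (t - A)
      rw [hfA, hf]; simp only
      by_cases htA : t ≤ A
      · have hta : t = A := le_antisymm htA ht'.1
        subst hta
        rw [if_pos le_rfl]
        ring
      · rw [if_neg htA, if_pos ht'.2]
        ring
    · have ht' : t ∈ Set.Icc B 1 := ht
      show f t = f B + (2:ℝ) ^ d * (t - B)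
      rw [hfB, hf]; simp only
      have h1 : ¬ t ≤ A := not_le.2 (lt_of_lt_of_le hAB ht'.1)
      by_cases htB : t ≤ B
      · have htb : t = B := le_antisymm htB ht'.1
        subst htb
        rw [if_neg h1, if_pos le_rfl]
        ring
      · rw [if_neg h1, if_neg htB]
  · intro t ht heq
    rw [hf] at heq
    simp only at heq
    split_ifs at heq with h1 h2
    · have := mul_right_cancel₀ (ne_of_gt ht.1) (by rw [heq, one_mul] : (2:ℝ)^c * t = 1 * t)
      exact h2c1 this
    · have hzero : ((2:ℝ) ^ c - 1) * A = 0 := by linear_combination heq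
      rcases mul_eq_zero.1 hzero with h | h
      · exact h2c1 (by linarith)
      · exact hApos.ne' h
    · have hzero : (1 - (2:ℝ) ^ d) * (1 - t) = 0 := by linear_combination heq - hkey
      rcases mul_eq_zero.1 hzero with h | h
      · exact h2d1 (by linarith)
      · linarith [ht.2]
end

section
/- Let f, g be increasing homeomorphisms of [0,1] fixing the endpoints, with push-up orbitals (a,b) of f and (c,d) of g. Let [x,y] ⊆ (a,b) be a compact subinterval. Then there exists an increasing homeomorphism σ of [0,1] fixing the endpoints such that [x,y] ⊆ (σ(c), σ(d)) and σ ∘ g ∘ σ⁻¹ agrees with f on [x,y]. -/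
/-!
Pick `p ∈ (c,d)`. The intervals `[gᵏ p, gᵏ⁺¹ p]` and `[fᵏ x, fᵏ⁺¹ x]` are consecutive
fundamental domains of `g` on `(c,d)` and of `f` on `(a,b)`. Any increasing bijection between
the first two domains extends, one domain at a time, by the rule `σ ∘ g = f ∘ σ`. The `f`-orbit
of `x` cannot stay in `[x,y]` (its limit would be a fixed point of `f` in `(a,b)`), so finitely
many domains cover `[x,y]`; outside them `σ` is completed by arbitrary increasing bijections
`[0,p] → [0,x]` and `[gⁿ⁺¹ p, 1] → [fⁿ⁺¹ x, 1]`.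
-/

open Set Function Filter Topology

structure IccIso (σ : ℝ → ℝ) (u v u' v' : ℝ) : Prop where
  le : u ≤ v
  strictMonoOn : StrictMonoOn σ (Icc u v)
  map_left : σ u = u'
  map_right : σ v = v'
  surjOn : SurjOn σ (Icc u v) (Icc u' v')

namespace IccIso

variable {σ σ₁ σ₂ : ℝ → ℝ} {u v w z u' v' w' z' u'' v'' : ℝ}

theorem mapsTo (h : IccIso σ u v u' v') : MapsTo σ (Icc u v) (Icc u' v') := by
  simpa only [h.map_left, h.map_right] using h.strictMonoOn.monotoneOn.mapsTo_Icc

theorem le' (h : IccIso σ u v u' v') : u' ≤ v' :=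
  h.map_left ▸ (h.mapsTo (left_mem_Icc.2 h.le)).2

theorem bijOn (h : IccIso σ u v u' v') : BijOn σ (Icc u v) (Icc u' v') :=
  ⟨h.mapsTo, h.strictMonoOn.injOn, h.surjOn⟩

theorem of_continuousOn (hc : ContinuousOn σ (Icc u v)) (hm : StrictMonoOn σ (Icc u v))
    (huv : u ≤ v) (hu : σ u = u') (hv : σ v = v') : IccIso σ u v u' v' :=
  ⟨huv, hm, hu, hv, hu ▸ hv ▸ intermediate_value_Icc huv hc⟩

theorem exists_of_lt (h : u < v) (h' : u' < v') : ∃ σ, IccIso σ u v u' v' := by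
  have hk : 0 < (v' - u') / (v - u) := div_pos (sub_pos.2 h') (sub_pos.2 h)
  refine ⟨fun t => u' + (t - u) * ((v' - u') / (v - u)), .of_continuousOn (by fun_prop)
    ?_ h.le (by simp) (by rw [mul_div_cancel₀ _ (sub_pos.2 h).ne']; ring)⟩
  exact fun s _ t _ hst => by gcongr

theorem continuousOn (h : IccIso σ u v u' v') : ContinuousOn σ (Icc u v) := by
  rw [continuousOn_iff_continuous_domRestrict]
  have hcont : Continuous (h.mapsTo.restrict σ (Icc u v) (Icc u' v')) :=
    Monotone.continuous_of_surjective (fun s t hst => h.strictMonoOn.monotoneOn s.2 t.2 hst)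
      fun z => let ⟨s, hs, hσs⟩ := h.surjOn z.2; ⟨⟨s, hs⟩, Subtype.ext hσs⟩
  exact continuous_subtype_val.comp hcont

theorem comp (h₁ : IccIso σ₁ u v u' v') (h₂ : IccIso σ₂ u' v' u'' v'') :
    IccIso (σ₂ ∘ σ₁) u v u'' v'' :=
  ⟨h₁.le, h₂.strictMonoOn.comp h₁.strictMonoOn h₁.mapsTo, by simp [h₁.map_left, h₂.map_left],
    by simp [h₁.map_right, h₂.map_right], h₂.surjOn.comp h₁.surjOn⟩

theorem restrict (h : IccIso σ u v u' v') (hw : w ∈ Icc u v) (hw' : w' ∈ Icc w v) :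
    IccIso σ w w' (σ w) (σ w') :=
  have hsub : Icc w w' ⊆ Icc u v := Icc_subset_Icc hw.1 hw'.2
  .of_continuousOn (h.continuousOn.mono hsub) (h.strictMonoOn.mono hsub) hw'.1 rfl rfl

theorem invFunOn (h : IccIso σ u v u' v') : IccIso (Function.invFunOn σ (Icc u v)) u' v' u v := by
  have hinv := h.bijOn.invOn_invFunOn
  have hmaps : MapsTo (Function.invFunOn σ (Icc u v)) (Icc u' v') (Icc u v) :=
    h.surjOn.mapsTo_invFunOn
  refine ⟨h.le', fun s hs t ht hst => ?_, ?_, ?_, fun s hs => ⟨σ s, h.mapsTo hs, hinv.1 hs⟩⟩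
  · rw [← h.strictMonoOn.lt_iff_lt (hmaps hs) (hmaps ht), hinv.2 hs, hinv.2 ht]
    exact hst
  · rw [← h.map_left]; exact hinv.1 (left_mem_Icc.2 h.le)
  · rw [← h.map_right]; exact hinv.1 (right_mem_Icc.2 h.le)

theorem glue (h₁ : IccIso σ₁ u v u' v') (h₂ : IccIso σ₂ v w v' w') :
    ∃ σ, IccIso σ u w u' w' ∧ EqOn σ σ₁ (Icc u v) ∧ EqOn σ σ₂ (Icc v w) := by
  set σ := fun t => if t ≤ v then σ₁ t else σ₂ t
  have e₁ : EqOn σ σ₁ (Icc u v) := fun t ht => if_pos ht.2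
  have e₂ : EqOn σ σ₂ (Icc v w) := fun t ht => by
    rcases ht.1.eq_or_lt with rfl | hlt
    · simp [σ, h₁.map_right, h₂.map_left]
    · simp [σ, hlt.not_ge]
  have hU := Icc_union_Icc_eq_Icc h₁.le h₂.le
  have hU' := Icc_union_Icc_eq_Icc h₁.le' h₂.le'
  refine ⟨σ, ⟨h₁.le.trans h₂.le, ?_, ?_, ?_, ?_⟩, e₁, e₂⟩
  · rw [← hU]
    exact (h₁.strictMonoOn.congr e₁.symm).union (h₂.strictMonoOn.congr e₂.symm)
      (isGreatest_Icc h₁.le) (isLeast_Icc h₂.le)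
  · rw [e₁ (left_mem_Icc.2 h₁.le), h₁.map_left]
  · rw [e₂ (right_mem_Icc.2 h₂.le), h₂.map_right]
  · rw [← hU, ← hU']
    exact (h₁.surjOn.congr e₁.symm).union_union (h₂.surjOn.congr e₂.symm)

theorem exists_extend (h : IccIso σ v w v' w') (hu : u < v) (hu' : u' < v') (hz : w < z)
    (hz' : w' < z') : ∃ σ', IccIso σ' u z u' z' ∧ EqOn σ' σ (Icc v w) := by
  obtain ⟨σl, hσl⟩ := exists_of_lt hu hu'
  obtain ⟨σr, hσr⟩ := exists_of_lt hz hz'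
  obtain ⟨σ₁, hσ₁, -, e₁⟩ := hσl.glue h
  obtain ⟨σ', hσ', e, -⟩ := hσ₁.glue hσr
  exact ⟨σ', hσ', fun t ht => (e ⟨hu.le.trans ht.1, ht.2⟩).trans (e₁ ht)⟩

theorem invFunOn_mem_Icc (h : IccIso σ u v u' v') {s s' t : ℝ} (hs : s ∈ Icc u v)
    (hs' : s' ∈ Icc u v) (ht : t ∈ Icc (σ s) (σ s')) :
    Function.invFunOn σ (Icc u v) t ∈ Icc s s' := by
  have hsub : Icc (σ s) (σ s') ⊆ Icc u' v' := Icc_subset_Icc (h.mapsTo hs).1 (h.mapsTo hs').2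
  have hinv := h.bijOn.invOn_invFunOn
  simpa only [hinv.1 hs, hinv.1 hs'] using
    (h.invFunOn.strictMonoOn.mono hsub).monotoneOn.mapsTo_Icc ht

end IccIso

structure PushesUpOn (g : ℝ → ℝ) (s : Set ℝ) : Prop where
  ordConnected : s.OrdConnected
  mapsTo : MapsTo g s s
  continuousOn : ContinuousOn g s
  strictMonoOn : StrictMonoOn g s
  lt_apply : ∀ t ∈ s, t < g t

theorem pushesUpOn_Ioo {g : ℝ → ℝ} {a b : ℝ} (hc : ContinuousOn g (Ioc a b))
    (hm : StrictMonoOn g (Ioc a b)) (hb : g b = b) (hpush : ∀ t ∈ Ioo a b, t < g t) :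
    PushesUpOn g (Ioo a b) where
  ordConnected := inferInstance
  mapsTo t ht := ⟨ht.1.trans (hpush t ht),
    hb ▸ hm (Ioo_subset_Ioc_self ht) (right_mem_Ioc.2 (ht.1.trans ht.2)) ht.2⟩
  continuousOn := hc.mono Ioo_subset_Ioc_self
  strictMonoOn := hm.mono Ioo_subset_Ioc_self
  lt_apply := hpush

namespace PushesUpOn

variable {f g : ℝ → ℝ} {s t : Set ℝ} {p x y : ℝ}

theorem iterate_mem (hg : PushesUpOn g s) (hp : p ∈ s) (k : ℕ) : g^[k] p ∈ s :=
  hg.mapsTo.iterate k hp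

theorem strictMono_iterate (hg : PushesUpOn g s) (hp : p ∈ s) :
    StrictMono fun k => g^[k] p :=
  strictMono_nat_of_lt_succ fun k => by
    simpa only [iterate_succ_apply'] using hg.lt_apply _ (hg.iterate_mem hp k)

theorem Icc_iterate_subset (hg : PushesUpOn g s) (hp : p ∈ s) (k : ℕ) : Icc p (g^[k] p) ⊆ s :=
  hg.ordConnected.out hp (hg.iterate_mem hp k)

theorem mapsTo_Icc_iterate (hg : PushesUpOn g s) (hp : p ∈ s) (k : ℕ) :
    MapsTo g (Icc p (g^[k] p)) (Icc p (g^[k + 1] p)) := by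
  intro u hu
  have hgu := (hg.strictMonoOn.mono (hg.Icc_iterate_subset hp k)).monotoneOn.mapsTo_Icc hu
  rw [← iterate_succ_apply' g k p] at hgu
  exact ⟨(hg.lt_apply p hp).le.trans hgu.1, hgu.2⟩

theorem iccIso_iterate (hg : PushesUpOn g s) (hp : p ∈ s) (k : ℕ) :
    IccIso g (g^[k] p) (g^[k + 1] p) (g^[k + 1] p) (g^[k + 2] p) := by
  have hsub : Icc (g^[k] p) (g^[k + 1] p) ⊆ s :=
    hg.ordConnected.out (hg.iterate_mem hp k) (hg.iterate_mem hp (k + 1))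
  exact .of_continuousOn (hg.continuousOn.mono hsub) (hg.strictMonoOn.mono hsub)
    ((hg.strictMono_iterate hp).monotone k.le_succ) (iterate_succ_apply' g k p).symm
    (iterate_succ_apply' g (k + 1) p).symm

theorem exists_lt_iterate (hf : PushesUpOn f s) (hx : x ∈ s) (hy : y ∈ s) :
    ∃ n, y < f^[n] x := by
  by_contra! hbound
  have hmono := (hf.strictMono_iterate hx).monotone
  have hbdd : BddAbove (range fun k => f^[k] x) := ⟨y, by rintro _ ⟨k, rfl⟩; exact hbound k⟩
  set L := ⨆ k, f^[k] x
  have hlim : Tendsto (fun k => f^[k] x) atTop (𝓝 L) := tendsto_atTop_ciSup hmono hbdd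
  have hL : L ∈ s := hf.ordConnected.out hx hy ⟨le_ciSup hbdd 0, ciSup_le hbound⟩
  have hfix : f L = L := by
    refine tendsto_nhds_unique ((hf.continuousOn L hL).tendsto.comp
      (tendsto_nhdsWithin_iff.2 ⟨hlim, .of_forall (hf.iterate_mem hx)⟩)) ?_
    simpa only [comp_def, ← iterate_succ_apply' f] using
      hlim.comp (tendsto_add_atTop_nat 1)
  exact (hf.lt_apply L hL).ne' hfix

theorem exists_equivariant (hg : PushesUpOn g s) (hf : PushesUpOn f t) (hp : p ∈ s) (hx : x ∈ t)
    (n : ℕ) : ∃ σ, IccIso σ p (g^[n + 1] p) x (f^[n + 1] x) ∧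
      (∀ k ≤ n + 1, σ (g^[k] p) = f^[k] x) ∧ ∀ u ∈ Icc p (g^[n] p), σ (g u) = f (σ u) := by
  induction n with
  | zero =>
    obtain ⟨σ, hσ⟩ := IccIso.exists_of_lt (hg.lt_apply p hp) (hf.lt_apply x hx)
    refine ⟨σ, hσ, fun k hk => ?_, fun u hu => ?_⟩
    · interval_cases k
      exacts [hσ.map_left, hσ.map_right]
    · obtain rfl : u = p := le_antisymm hu.2 hu.1
      exact hσ.map_right.trans (congrArg f hσ.map_left.symm)
  | succ n ih =>
    obtain ⟨σ, hσ, hval, hequiv⟩ := ih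
    have hq := (hg.strictMono_iterate hp).monotone
    have hσlast : IccIso σ (g^[n] p) (g^[n + 1] p) (f^[n] x) (f^[n + 1] x) := by
      simpa only [hval n n.le_succ, hval (n + 1) le_rfl] using
        hσ.restrict ⟨hq n.zero_le, hq n.le_succ⟩ (right_mem_Icc.2 (hq n.le_succ))
    have hgn := hg.iccIso_iterate hp n
    -- on the new fundamental domain, `σ` is forced to be `f ∘ σ ∘ g⁻¹`
    obtain ⟨σ', hσ', h₁, h₂⟩ := hσ.glue ((hgn.invFunOn.comp hσlast).comp (hf.iccIso_iterate hx n))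
    refine ⟨σ', hσ', fun k hk => ?_, fun u hu => ?_⟩
    · rcases hk.lt_or_eq with hk | rfl
      · rw [h₁ ⟨hq k.zero_le, hq (Nat.lt_succ_iff.1 hk)⟩, hval k (Nat.lt_succ_iff.1 hk)]
      · exact hσ'.map_right
    · rw [h₁ hu]
      rcases le_total u (g^[n] p) with hun | hnu
      · rw [h₁ (hg.mapsTo_Icc_iterate hp n ⟨hu.1, hun⟩), hequiv u ⟨hu.1, hun⟩]
      · rw [h₂ (hgn.mapsTo ⟨hnu, hu.2⟩), comp_apply, comp_apply,
          hgn.strictMonoOn.injOn.leftInvOn_invFunOn ⟨hnu, hu.2⟩]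

end PushesUpOn

theorem stmt18_general (f g : ℝ → ℝ)
    (hfc : ContinuousOn f (Set.Icc 0 1)) (hfm : StrictMonoOn f (Set.Icc 0 1))
    (hgc : ContinuousOn g (Set.Icc 0 1)) (hgm : StrictMonoOn g (Set.Icc 0 1))
    (a b c d : ℝ) (h0a : 0 ≤ a) (hb1 : b ≤ 1)
    (h0c : 0 ≤ c) (hcd : c < d) (hd1 : d ≤ 1)
    (hfb : f b = b) (hfpush : ∀ t ∈ Set.Ioo a b, t < f t)
    (hgd : g d = d) (hgpush : ∀ t ∈ Set.Ioo c d, t < g t)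
    (x y : ℝ) (hax : a < x) (hxy : x ≤ y) (hyb : y < b) :
    ∃ σ τ : ℝ → ℝ,
      ContinuousOn σ (Set.Icc 0 1) ∧ StrictMonoOn σ (Set.Icc 0 1) ∧
      Set.BijOn σ (Set.Icc 0 1) (Set.Icc 0 1) ∧ σ 0 = 0 ∧ σ 1 = 1 ∧
      Set.InvOn τ σ (Set.Icc 0 1) (Set.Icc 0 1) ∧
      σ c < x ∧ y < σ d ∧
      ∀ t ∈ Set.Icc x y, σ (g (τ t)) = f t := by
  have hab : Ioc a b ⊆ Icc 0 1 := Ioc_subset_Icc_self.trans (Icc_subset_Icc h0a hb1)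
  have hcd' : Ioc c d ⊆ Icc 0 1 := Ioc_subset_Icc_self.trans (Icc_subset_Icc h0c hd1)
  have hf := pushesUpOn_Ioo (hfc.mono hab) (hfm.mono hab) hfb hfpush
  have hg := pushesUpOn_Ioo (hgc.mono hcd') (hgm.mono hcd') hgd hgpush
  obtain ⟨p, hp⟩ := nonempty_Ioo.2 hcd
  have hx : x ∈ Ioo a b := ⟨hax, hxy.trans_lt hyb⟩
  obtain ⟨n, hn⟩ := hf.exists_lt_iterate hx ⟨hax.trans_le hxy, hyb⟩
  obtain ⟨σm, hσm, hval, hequiv⟩ := hg.exists_equivariant hf hp hx n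
  obtain ⟨σ, hσ, hσσm⟩ := hσm.exists_extend (h0c.trans_lt hp.1) (h0a.trans_lt hax)
    ((hg.iterate_mem hp (n + 1)).2.trans_le hd1) ((hf.iterate_mem hx (n + 1)).2.trans_le hb1)
  have hq := (hg.strictMono_iterate hp).monotone
  have hq01 (k : ℕ) : g^[k] p ∈ Icc 0 1 := hcd' (Ioo_subset_Ioc_self (hg.iterate_mem hp k))
  have hσq (k : ℕ) (hk : k ≤ n + 1) : σ (g^[k] p) = f^[k] x :=
    (hσσm ⟨hq k.zero_le, hq hk⟩).trans (hval k hk)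
  have hp01 : p ∈ Icc 0 1 := hq01 0
  have hσp : σ p = x := hσq 0 (Nat.zero_le _)
  have hinv := hσ.bijOn.invOn_invFunOn
  refine ⟨σ, invFunOn σ (Icc 0 1), hσ.continuousOn, hσ.strictMonoOn, hσ.bijOn, hσ.map_left,
    hσ.map_right, hinv, ?_, ?_, fun t ht => ?_⟩
  · exact hσp ▸ hσ.strictMonoOn ⟨h0c, hcd.le.trans hd1⟩ hp01 hp.1
  · calc y < f^[n] x := hn
      _ < f^[n + 1] x := hf.strictMono_iterate hx n.lt_succ_self
      _ = σ (g^[n + 1] p) := (hσq (n + 1) le_rfl).symm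
      _ < σ d := hσ.strictMonoOn (hq01 _) ⟨h0c.trans hcd.le, hd1⟩ (hg.iterate_mem hp _).2
  · have ht01 : t ∈ Icc 0 1 := ⟨(h0a.trans hax.le).trans ht.1, ht.2.trans (hyb.le.trans hb1)⟩
    have hτt := hσ.invFunOn_mem_Icc hp01 (hq01 n)
      (by rw [hσp, hσq n n.le_succ]; exact ⟨ht.1, ht.2.trans hn.le⟩)
    rw [hσσm (hg.mapsTo_Icc_iterate hp n hτt), hequiv _ hτt,
      ← hσσm ⟨hτt.1, hτt.2.trans (hq n.le_succ)⟩, hinv.2 ht01]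

/-- Given push-up orbitals `(a,b)` of `f` and `(c,d)` of `g` and a compact subinterval
`[x,y] ⊆ (a,b)`, there is a homeomorphism `σ` of `[0,1]` (with inverse `τ` on `[0,1]`)
such that `[x,y] ⊆ (σ c, σ d)` and the conjugate `σ ∘ g ∘ σ⁻¹` agrees with `f` on
`[x,y]`. -/
theorem stmt18 (f g : ℝ → ℝ)
    (hfc : ContinuousOn f (Set.Icc 0 1)) (hfm : StrictMonoOn f (Set.Icc 0 1))
    (hfbij : Set.BijOn f (Set.Icc 0 1) (Set.Icc 0 1)) (hf0 : f 0 = 0) (hf1 : f 1 = 1)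
    (hgc : ContinuousOn g (Set.Icc 0 1)) (hgm : StrictMonoOn g (Set.Icc 0 1))
    (hgbij : Set.BijOn g (Set.Icc 0 1) (Set.Icc 0 1)) (hg0 : g 0 = 0) (hg1 : g 1 = 1)
    (a b c d : ℝ) (h0a : 0 ≤ a) (hab : a < b) (hb1 : b ≤ 1)
    (h0c : 0 ≤ c) (hcd : c < d) (hd1 : d ≤ 1)
    (hfa : f a = a) (hfb : f b = b) (hfpush : ∀ t ∈ Set.Ioo a b, t < f t)
    (hgc' : g c = c) (hgd : g d = d) (hgpush : ∀ t ∈ Set.Ioo c d, t < g t)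
    (x y : ℝ) (hax : a < x) (hxy : x ≤ y) (hyb : y < b) :
    ∃ σ τ : ℝ → ℝ,
      ContinuousOn σ (Set.Icc 0 1) ∧ StrictMonoOn σ (Set.Icc 0 1) ∧
      Set.BijOn σ (Set.Icc 0 1) (Set.Icc 0 1) ∧ σ 0 = 0 ∧ σ 1 = 1 ∧
      Set.InvOn τ σ (Set.Icc 0 1) (Set.Icc 0 1) ∧
      σ c < x ∧ y < σ d ∧
      ∀ t ∈ Set.Icc x y, σ (g (τ t)) = f t :=
  stmt18_general f g hfc hfm hgc hgm a b c d h0a hb1 h0c hcd hd1 hfb hfpush hgd hgpush x y hax hxy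
    hyb
end
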